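/- Let H be a Hilbert space, C a positive self-adjoint trace-class operator on H with square root C^{1/2}, S a bounded positive self-adjoint operator, B > 0, and g : X → H a bounded continuous function on a compact metric space X. Define V(μ) = -Tr(C^{1/2}(B·S_μ + I)^{-1}C^{1/2}) where S_μ = ∫ g(x)⊗g(x) dμ(x) for probability measures μ. Then for any probability measures μ, ν and t ∈ [0,1], with μ_t = (1-t)μ + tν, we have V(μ_t) ≥ (1-t)V(μ) + tV(ν), i.e., V is concave over mixtures of probability measures. -/

import Mathlib

open MeasureTheory
open scoped RealInnerProductSpace

section Aux

variable {H : Type*} [NormedAddCommGroup H] [InnerProductSpace ℝ H]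

/-- Key quadratic inequality: if `A` is symmetric positive and `A z = x`, then
`2⟪x,y⟫ - ⟪A y, y⟫ ≤ ⟪z, x⟫` for every `y`. -/
lemma stmt18_quad (A : H →L[ℝ] H) (hsa : ∀ u v : H, ⟪A u, v⟫ = ⟪u, A v⟫)
    (hpos : ∀ u : H, 0 ≤ ⟪A u, u⟫) {x y z : H} (hz : A z = x) :
    2 * ⟪x, y⟫ - ⟪A y, y⟫ ≤ ⟪z, x⟫ := by
  have h := hpos (y - z)
  have e1 : ⟪A y, z⟫ = ⟪y, x⟫ := by rw [hsa y z, hz]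
  have e2 : ⟪A z, y⟫ = ⟪x, y⟫ := by rw [hz]
  have e3 : ⟪A z, z⟫ = ⟪x, z⟫ := by rw [hz]
  simp only [map_sub, inner_sub_left, inner_sub_right, e1, e2, e3] at h
  have h2 : ⟪y, x⟫ = ⟪x, y⟫ := real_inner_comm _ _
  have h3 : ⟪x, z⟫ = ⟪z, x⟫ := real_inner_comm _ _
  linarith

end Aux

/-- concavity over mixtures of probability measures of the expected
utility `V(μ) = -Tr(C^{1/2}(B·S_μ + I)⁻¹C^{1/2})` where
`S_μ = ∫ g(x)⊗g(x) dμ(x)`. The trace is expressed via a Hilbert basis `e`, the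
trace-class property of `C` and of the trace arguments via summability of diagonals. -/
theorem stmt18 {X : Type*} [MetricSpace X] [CompactSpace X] [MeasurableSpace X] [BorelSpace X]
    {H ι : Type*} [NormedAddCommGroup H] [InnerProductSpace ℝ H] [CompleteSpace H]
    (e : HilbertBasis ι ℝ H)
    (C sqrtC : H →L[ℝ] H) (hC : C.IsPositive) (hsqrtC : sqrtC.IsPositive)
    (hsq : sqrtC ∘L sqrtC = C)
    (hCtr : Summable fun i => ⟪C (e i), e i⟫)
    (B : ℝ) (hB : 0 < B) (g : X → H) (hg : Continuous g)
    (V : Measure X → ℝ)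
    (hV : ∀ μ : Measure X, V μ =
      -∑' i, ⟪(sqrtC ∘L (Ring.inverse
          (B • (∫ x, (innerSL ℝ (g x)).smulRight (g x) ∂μ) + 1) ∘L sqrtC)) (e i), e i⟫)
    (hsum : ∀ μ : Measure X, IsProbabilityMeasure μ →
      Summable fun i => ⟪(sqrtC ∘L (Ring.inverse
          (B • (∫ x, (innerSL ℝ (g x)).smulRight (g x) ∂μ) + 1) ∘L sqrtC)) (e i), e i⟫)
    (μ ν : Measure X) [IsProbabilityMeasure μ] [IsProbabilityMeasure ν]
    (t : ℝ) (ht : t ∈ Set.Icc (0 : ℝ) 1) :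
    (1 - t) * V μ + t * V ν
      ≤ V (ENNReal.ofReal (1 - t) • μ + ENNReal.ofReal t • ν) := by
  obtain ⟨ht0, ht1⟩ := ht
  have ht0' : (0 : ℝ) ≤ 1 - t := by linarith
  set T : X → (H →L[ℝ] H) := fun x => (innerSL ℝ (g x)).smulRight (g x) with hTdef
  -- continuity and integrability of the integrand
  have hTcont : Continuous T := by
    exact isBoundedBilinearMap_smulRight.continuous.comp
      (((innerSL ℝ (E := H)).continuous.comp hg).prodMk hg)
  have hTint : ∀ (κ : Measure X), IsFiniteMeasure κ → Integrable T κ := fun κ hκ =>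
    hTcont.integrable_of_hasCompactSupport (HasCompactSupport.of_compactSpace T)
  -- the inner product formula for `B • S_κ + 1`
  have hS : ∀ (κ : Measure X), Integrable T κ → ∀ v w : H,
      ⟪(∫ x, T x ∂κ) v, w⟫ = ∫ x, ⟪g x, v⟫ * ⟪g x, w⟫ ∂κ := by
    intro κ hκ v w
    rw [ContinuousLinearMap.integral_apply hκ v, real_inner_comm,
      ← integral_inner (hκ.apply_continuousLinearMap v)]
    refine integral_congr_ae (Filter.Eventually.of_forall fun x => ?_)
    simp only [hTdef, ContinuousLinearMap.smulRight_apply, innerSL_apply_apply,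
      real_inner_smul_right]
    rw [real_inner_comm w (g x)]
  have hAinner : ∀ (κ : Measure X), Integrable T κ → ∀ v w : H,
      ⟪(B • (∫ x, T x ∂κ) + 1) v, w⟫
        = B * (∫ x, ⟪g x, v⟫ * ⟪g x, w⟫ ∂κ) + ⟪v, w⟫ := by
    intro κ hκ v w
    rw [ContinuousLinearMap.add_apply, ContinuousLinearMap.smul_apply,
      ContinuousLinearMap.one_apply, inner_add_left, real_inner_smul_left, hS κ hκ v w]
  -- symmetry and positivity
  have hsym : ∀ (κ : Measure X), Integrable T κ → ∀ u v : H,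
      ⟪(B • (∫ x, T x ∂κ) + 1) u, v⟫ = ⟪u, (B • (∫ x, T x ∂κ) + 1) v⟫ := by
    intro κ hκ u v
    have hl := hAinner κ hκ u v
    have hr := hAinner κ hκ v u
    have hc : ⟪u, (B • (∫ x, T x ∂κ) + 1) v⟫ = ⟪(B • (∫ x, T x ∂κ) + 1) v, u⟫ :=
      real_inner_comm _ _
    have h12 : (∫ x, ⟪g x, u⟫ * ⟪g x, v⟫ ∂κ) = ∫ x, ⟪g x, v⟫ * ⟪g x, u⟫ ∂κ := by
      simp_rw [mul_comm]
    have h13 : ⟪u, v⟫ = ⟪v, u⟫ := real_inner_comm _ _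
    rw [hc, hl, hr, h12, h13]
  have hposA : ∀ (κ : Measure X), Integrable T κ → ∀ u : H,
      0 ≤ ⟪(B • (∫ x, T x ∂κ) + 1) u, u⟫ := by
    intro κ hκ u
    rw [hAinner κ hκ u u]
    have h1 : 0 ≤ ∫ x, ⟪g x, u⟫ * ⟪g x, u⟫ ∂κ :=
      integral_nonneg fun x => mul_self_nonneg _
    have h2 : 0 ≤ ⟪u, u⟫ := real_inner_self_nonneg
    nlinarith
  -- invertibility via Lax–Milgram
  have hunit : ∀ (κ : Measure X), Integrable T κ →
      IsUnit (B • (∫ x, T x ∂κ) + 1 : H →L[ℝ] H) := by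
    intro κ hκ
    set Aκ : H →L[ℝ] H := B • (∫ x, T x ∂κ) + 1 with hAκ
    have hco : IsCoercive ((innerSL ℝ).comp Aκ) := by
      refine ⟨1, one_pos, fun u => ?_⟩
      have h1 : 0 ≤ ∫ x, ⟪g x, u⟫ * ⟪g x, u⟫ ∂κ :=
        integral_nonneg fun x => mul_self_nonneg _
      have h2 : ((innerSL ℝ).comp Aκ) u u = ⟪Aκ u, u⟫ := rfl
      rw [h2, hAinner κ hκ u u]
      have h3 : ⟪u, u⟫ = ‖u‖ * ‖u‖ := real_inner_self_eq_norm_mul_norm u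
      nlinarith
    have heq : (hco.continuousLinearEquivOfBilin : H →L[ℝ] H) = Aκ := by
      ext v
      refine ext_inner_right ℝ fun w => ?_
      rw [ContinuousLinearEquiv.coe_coe]
      exact hco.continuousLinearEquivOfBilin_apply v w
    have happ : ∀ v : H, hco.continuousLinearEquivOfBilin v = Aκ v := fun v => by
      simpa using DFunLike.congr_fun heq v
    have h1 : Aκ * (hco.continuousLinearEquivOfBilin.symm : H →L[ℝ] H) = 1 := by
      ext x
      have := hco.continuousLinearEquivOfBilin.apply_symm_apply x
      rw [happ] at this
      simpa using this
    have h2 : (hco.continuousLinearEquivOfBilin.symm : H →L[ℝ] H) * Aκ = 1 := by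
      ext x
      rw [ContinuousLinearMap.mul_apply, ContinuousLinearMap.one_apply,
        ← happ x]
      simpa using hco.continuousLinearEquivOfBilin.symm_apply_apply x
    exact ⟨⟨Aκ, (hco.continuousLinearEquivOfBilin.symm : H →L[ℝ] H), h1, h2⟩, rfl⟩
  -- the mixture measure
  set κt : Measure X := ENNReal.ofReal (1 - t) • μ + ENNReal.ofReal t • ν with hκt
  have hκtprob : IsProbabilityMeasure κt := by
    constructor
    rw [hκt]
    simp only [Measure.coe_add, Pi.add_apply, Measure.smul_apply, measure_univ,
      smul_eq_mul, mul_one]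
    rw [← ENNReal.ofReal_add ht0' ht0]
    norm_num
  have hTμ : Integrable T μ := hTint μ inferInstance
  have hTν : Integrable T ν := hTint ν inferInstance
  have hTκt : Integrable T κt := by
    haveI := hκtprob
    exact hTint κt inferInstance
  -- linearity of `S` in the measure
  have hSt : (∫ x, T x ∂κt) = (1 - t) • (∫ x, T x ∂μ) + t • (∫ x, T x ∂ν) := by
    rw [hκt, integral_add_measure (hTμ.smul_measure ENNReal.ofReal_ne_top)
      (hTν.smul_measure ENNReal.ofReal_ne_top), integral_smul_measure, integral_smul_measure,
      ENNReal.toReal_ofReal ht0', ENNReal.toReal_ofReal ht0]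
  have hAt : (B • (∫ x, T x ∂κt) + 1 : H →L[ℝ] H)
      = (1 - t) • (B • (∫ x, T x ∂μ) + 1) + t • (B • (∫ x, T x ∂ν) + 1) := by
    rw [hSt]
    module
  -- abbreviations for the inverses
  set Aμ : H →L[ℝ] H := B • (∫ x, T x ∂μ) + 1 with hAμdef
  set Aν : H →L[ℝ] H := B • (∫ x, T x ∂ν) + 1 with hAνdef
  set At : H →L[ℝ] H := B • (∫ x, T x ∂κt) + 1 with hAtdef
  set Rμ : H →L[ℝ] H := Ring.inverse Aμ with hRμ
  set Rν : H →L[ℝ] H := Ring.inverse Aν with hRν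
  set Rt : H →L[ℝ] H := Ring.inverse At with hRt
  have hAR : ∀ (A R : H →L[ℝ] H), A * R = 1 → ∀ v : H, A (R v) = v := by
    intro A R h v
    have : (A * R) v = (1 : H →L[ℝ] H) v := by rw [h]
    simpa using this
  have hARμ : ∀ v : H, Aμ (Rμ v) = v :=
    hAR Aμ Rμ (Ring.mul_inverse_cancel Aμ (hunit μ hTμ))
  have hARν : ∀ v : H, Aν (Rν v) = v :=
    hAR Aν Rν (Ring.mul_inverse_cancel Aν (hunit ν hTν))
  have hARt : ∀ v : H, At (Rt v) = v :=
    hAR At Rt (Ring.mul_inverse_cancel At (hunit κt hTκt))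
  -- the per-index inequality
  have hsqrtCsym : ∀ u v : H, ⟪sqrtC u, v⟫ = ⟪u, sqrtC v⟫ := fun u v =>
    hsqrtC.1 u v
  have hdiag : ∀ (R : H →L[ℝ] H) (i : ι),
      ⟪(sqrtC ∘L (R ∘L sqrtC)) (e i), e i⟫ = ⟪R (sqrtC (e i)), sqrtC (e i)⟫ := by
    intro R i
    rw [ContinuousLinearMap.comp_apply, ContinuousLinearMap.comp_apply, hsqrtCsym]
  have key : ∀ i : ι, ⟪(sqrtC ∘L (Rt ∘L sqrtC)) (e i), e i⟫
      ≤ (1 - t) * ⟪(sqrtC ∘L (Rμ ∘L sqrtC)) (e i), e i⟫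
        + t * ⟪(sqrtC ∘L (Rν ∘L sqrtC)) (e i), e i⟫ := by
    intro i
    rw [hdiag, hdiag, hdiag]
    set xi : H := sqrtC (e i) with hxi
    set y : H := Rt xi with hy
    have hAty : At y = xi := hARt xi
    have h1 : ⟪Rt xi, xi⟫ = 2 * ⟪xi, y⟫ - ⟪At y, y⟫ := by
      rw [hAty, ← hy, real_inner_comm y xi]
      ring
    have hsplit : ⟪At y, y⟫ = (1 - t) * ⟪Aμ y, y⟫ + t * ⟪Aν y, y⟫ := by
      rw [hAt]
      simp only [ContinuousLinearMap.add_apply, ContinuousLinearMap.smul_apply,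
        inner_add_left, real_inner_smul_left]
    have hquadμ : 2 * ⟪xi, y⟫ - ⟪Aμ y, y⟫ ≤ ⟪Rμ xi, xi⟫ :=
      stmt18_quad Aμ (hsym μ hTμ) (hposA μ hTμ) (hARμ xi)
    have hquadν : 2 * ⟪xi, y⟫ - ⟪Aν y, y⟫ ≤ ⟪Rν xi, xi⟫ :=
      stmt18_quad Aν (hsym ν hTν) (hposA ν hTν) (hARν xi)
    have hcomb : ⟪Rt xi, xi⟫ = (1 - t) * (2 * ⟪xi, y⟫ - ⟪Aμ y, y⟫)
        + t * (2 * ⟪xi, y⟫ - ⟪Aν y, y⟫) := by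
      rw [h1, hsplit]; ring
    rw [hcomb]
    have h2 := mul_le_mul_of_nonneg_left hquadμ ht0'
    have h3 := mul_le_mul_of_nonneg_left hquadν ht0
    linarith
  -- summability
  have hsμ := hsum μ inferInstance
  have hsν := hsum ν inferInstance
  have hsκt := hsum κt hκtprob
  -- conclude via tsum comparison
  have hmono : (∑' i, ⟪(sqrtC ∘L (Rt ∘L sqrtC)) (e i), e i⟫)
      ≤ ∑' i, ((1 - t) * ⟪(sqrtC ∘L (Rμ ∘L sqrtC)) (e i), e i⟫
        + t * ⟪(sqrtC ∘L (Rν ∘L sqrtC)) (e i), e i⟫) :=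
    Summable.tsum_le_tsum key hsκt ((hsμ.mul_left _).add (hsν.mul_left _))
  have hsplitsum : (∑' i, ((1 - t) * ⟪(sqrtC ∘L (Rμ ∘L sqrtC)) (e i), e i⟫
        + t * ⟪(sqrtC ∘L (Rν ∘L sqrtC)) (e i), e i⟫))
      = (1 - t) * (∑' i, ⟪(sqrtC ∘L (Rμ ∘L sqrtC)) (e i), e i⟫)
        + t * (∑' i, ⟪(sqrtC ∘L (Rν ∘L sqrtC)) (e i), e i⟫) := by
    rw [Summable.tsum_add (hsμ.mul_left _) (hsν.mul_left _), tsum_mul_left, tsum_mul_left]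
  rw [hV μ, hV ν, hV κt]
  linarith
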